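/- There exists a nonempty closed subset Q of Baire space that is not compact and such that any two distinct elements f, g ∈ Q are Turing incomparable: for all f, g ∈ Q with f ≠ g, neither f ≤ᵀ g nor g ≤ᵀ f. -/

import Mathlib

/-- Partial recursiveness in an oracle `g` (following Mathlib's `Nat.Partrec`,
with an extra `oracle` constructor). -/
inductive RecursiveIn' (g : ℕ →. ℕ) : (ℕ →. ℕ) → Prop
  | zero : RecursiveIn' g (fun _ => Part.some 0)
  | succ : RecursiveIn' g ↑Nat.succ
  | left : RecursiveIn' g ↑(fun n : ℕ => n.unpair.1)
  | right : RecursiveIn' g ↑(fun n : ℕ => n.unpair.2)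
  | oracle : RecursiveIn' g g
  | pair {f h : ℕ →. ℕ} : RecursiveIn' g f → RecursiveIn' g h →
      RecursiveIn' g (fun n => Nat.pair <$> f n <*> h n)
  | comp {f h : ℕ →. ℕ} : RecursiveIn' g f → RecursiveIn' g h →
      RecursiveIn' g (fun n => h n >>= f)
  | prec {f h : ℕ →. ℕ} : RecursiveIn' g f → RecursiveIn' g h →
      RecursiveIn' g (Nat.unpaired fun a n =>
        n.rec (f a) fun y IH => do let i ← IH; h (Nat.pair a (Nat.pair y i)))
  | rfind {f : ℕ →. ℕ} : RecursiveIn' g f →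
      RecursiveIn' g (fun a => Nat.rfind fun n => (fun m => m = 0) <$> f (Nat.pair a n))

/-- `f ≤ᵀ g` : `f` is Turing reducible to `g`, i.e. `f` is computable with oracle `g`. -/
def TuringReducible' (f g : ℕ → ℕ) : Prop :=
  RecursiveIn' ↑g ↑f

infix:50 " ≤ᵀ " => TuringReducible'

/-!
Baire category. By the use principle, the oracles `g` on which an oracle program `c` computes a
fixed `f` form a nowhere dense set, unless `c` restricted to some basic open set already pins `f`
down; only countably many `f` are pinned down in this way. So the upper Turing cone of any other
`f` is meagre, while lower Turing cones are countable. Hence each clopen set `{h | h 0 = k}`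
contains an `h_k`, itself not pinned down, that is Turing incomparable with `h_0, …, h_{k-1}`.
The range of `k ↦ h_k` is a section of the projection `h ↦ h 0` onto the discrete space `ℕ`,
hence closed, and it is not compact since it maps onto `ℕ`.
-/

open Set Filter Topology TopologicalSpace

universe u

section Topology

variable {X : Type*} [TopologicalSpace X]

section Part

variable {α β : Type u}

theorem isOpen_setOf_mem_bind {p : X → Part α} {q : X → α → Part β}
    (hp : ∀ a, IsOpen {x | a ∈ p x}) (hq : ∀ a b, IsOpen {x | b ∈ q x a}) (b : β) :
    IsOpen {x | b ∈ p x >>= q x} := by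
  have : {x | b ∈ p x >>= q x} = ⋃ a, {x | a ∈ p x} ∩ {x | b ∈ q x a} := by
    ext x; simp [Part.mem_bind_iff]
  exact this ▸ isOpen_iUnion fun a => (hp a).inter (hq a b)

theorem isOpen_setOf_mem_map {p : X → Part α} (hp : ∀ a, IsOpen {x | a ∈ p x}) (f : α → β)
    (b : β) : IsOpen {x | b ∈ f <$> p x} := by
  have : {x | b ∈ f <$> p x} = ⋃ (a) (_ : f a = b), {x | a ∈ p x} := by
    ext x; simp [Part.mem_map_iff, and_comm]
  exact this ▸ isOpen_biUnion fun a _ => hp a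

theorem isOpen_setOf_mem_natRec {p : X → Part α} {q : X → ℕ → α → Part α}
    (hp : ∀ a, IsOpen {x | a ∈ p x}) (hq : ∀ y a b, IsOpen {x | b ∈ q x y a}) (k : ℕ) (b : α) :
    IsOpen {x | b ∈ (Nat.rec (p x) (fun y r => r >>= q x y) k : Part α)} := by
  induction k generalizing b with
  | zero => exact hp b
  | succ k ih => exact isOpen_setOf_mem_bind ih (hq k) b

theorem isOpen_setOf_mem_rfind {p : X → ℕ →. Bool} (hp : ∀ n b, IsOpen {x | b ∈ p x n}) (n : ℕ) :
    IsOpen {x | n ∈ Nat.rfind (p x)} := by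
  have : {x | n ∈ Nat.rfind (p x)} = {x | true ∈ p x n} ∩ ⋂ m ∈ Iio n, {x | false ∈ p x m} := by
    ext x; simp [Nat.mem_rfind]
  exact this ▸ (hp n true).inter ((finite_Iio n).isOpen_biInter fun m _ => hp m false)

end Part

instance Pi.perfectSpace {ι : Type*} {Y : ι → Type*} [Infinite ι] [∀ i, TopologicalSpace (Y i)]
    [∀ i, Nontrivial (Y i)] : PerfectSpace (∀ i, Y i) := by
  classical
  refine perfectSpace_iff_forall_not_isolated.mpr fun x => ?_
  choose z hz using fun i => exists_ne (x i)
  have hconv : Tendsto (fun i => Function.update x i (z i)) cofinite (𝓝[≠] x) := by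
    refine tendsto_nhdsWithin_iff.mpr ⟨tendsto_pi_nhds.mpr fun j => ?_, ?_⟩
    · refine tendsto_const_nhds.congr' ?_
      filter_upwards [(finite_singleton j).compl_mem_cofinite] with i hij
      exact (Function.update_of_ne (Ne.symm hij) _ _).symm
    · exact Eventually.of_forall fun i hi => hz i (by rw [← hi, Function.update_self])
  exact hconv.neBot

theorem Set.Countable.isMeagre [T1Space X] [PerfectSpace X] {s : Set X} (hs : s.Countable) :
    IsMeagre s := by
  rw [← biUnion_of_singleton s]
  refine isMeagre_biUnion hs fun x _ => IsNowhereDense.isMeagre ?_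
  rw [IsNowhereDense, closure_singleton, interior_singleton]

theorem TopologicalSpace.IsTopologicalBasis.isNowhereDense {B : Set (Set X)}
    (hB : IsTopologicalBasis B) {s : Set X}
    (h : ∀ U ∈ B, U.Nonempty → ∃ V ⊆ U, IsOpen V ∧ V.Nonempty ∧ Disjoint V s) :
    IsNowhereDense s := by
  refine eq_empty_of_forall_notMem fun x hx => ?_
  obtain ⟨U, hUB, hxU, hU⟩ := hB.exists_subset_of_mem_open hx isOpen_interior
  obtain ⟨V, hVU, hV, ⟨y, hyV⟩, hVs⟩ := h U hUB ⟨x, hxU⟩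
  exact (hVs.closure_right hV).notMem_of_mem_left hyV (interior_subset (hU (hVU hyV)))

theorem Function.LeftInverse.not_isCompact_range {p : X → ℕ} {F : ℕ → X}
    (h : Function.LeftInverse p F) (hp : Continuous p) : ¬ IsCompact (range F) := by
  intro hc
  have himage : p '' range F = univ := by rw [← range_comp, h.comp_eq_id, range_id]
  exact infinite_univ (himage ▸ hc.image hp).finite_of_discrete

end Topology

inductive OracleCode
  | zero | succ | left | right | oracle
  | pair (a b : OracleCode) | comp (a b : OracleCode) | prec (a b : OracleCode)
  | rfind (a : OracleCode)
  deriving Countable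

namespace OracleCode

def eval (g : ℕ → ℕ) : OracleCode → ℕ →. ℕ
  | zero => fun _ => Part.some 0
  | succ => ↑Nat.succ
  | left => ↑(fun n : ℕ => n.unpair.1)
  | right => ↑(fun n : ℕ => n.unpair.2)
  | oracle => ↑g
  | pair a b => fun n => Nat.pair <$> eval g a n <*> eval g b n
  | comp a b => fun n => eval g b n >>= eval g a
  | prec a b => Nat.unpaired fun x n =>
      n.rec (eval g a x) fun y IH => do let i ← IH; eval g b (Nat.pair x (Nat.pair y i))
  | rfind a => fun x => Nat.rfind fun n => (fun m => m = 0) <$> eval g a (Nat.pair x n)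

theorem exists_eval_eq {g : ℕ → ℕ} {f : ℕ →. ℕ} (h : RecursiveIn' g f) : ∃ c, eval g c = f := by
  induction h with
  | zero => exact ⟨zero, rfl⟩
  | succ => exact ⟨succ, rfl⟩
  | left => exact ⟨left, rfl⟩
  | right => exact ⟨right, rfl⟩
  | oracle => exact ⟨oracle, rfl⟩
  | pair _ _ iha ihb => obtain ⟨a, rfl⟩ := iha; obtain ⟨b, rfl⟩ := ihb; exact ⟨pair a b, rfl⟩
  | comp _ _ iha ihb => obtain ⟨a, rfl⟩ := iha; obtain ⟨b, rfl⟩ := ihb; exact ⟨comp a b, rfl⟩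
  | prec _ _ iha ihb => obtain ⟨a, rfl⟩ := iha; obtain ⟨b, rfl⟩ := ihb; exact ⟨prec a b, rfl⟩
  | rfind _ iha => obtain ⟨a, rfl⟩ := iha; exact ⟨rfind a, rfl⟩

/-- The use principle: a convergent computation queries the oracle only finitely often. -/
theorem isOpen_setOf_mem_eval (c : OracleCode) (n m : ℕ) : IsOpen {g | m ∈ c.eval g n} := by
  induction c generalizing n m with
  | zero | succ | left | right => simp only [eval]; exact isOpen_const
  | oracle =>
    have : {g : ℕ → ℕ | m ∈ eval g oracle n} = (fun g => g n) ⁻¹' {m} := by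
      ext; simp [eval, eq_comm]
    exact this ▸ (isOpen_discrete {m}).preimage (continuous_apply n)
  | pair a b iha ihb =>
    exact isOpen_setOf_mem_bind (isOpen_setOf_mem_map (iha n) _) (isOpen_setOf_mem_map (ihb n)) m
  | comp a b iha ihb => exact isOpen_setOf_mem_bind (ihb n) iha m
  | prec a b iha ihb => exact isOpen_setOf_mem_natRec (iha _) (fun _ _ => ihb _) _ m
  | rfind a iha => exact isOpen_setOf_mem_rfind (fun k => isOpen_setOf_mem_map (iha _) _) m

def Determines (c : OracleCode) (U : Set (ℕ → ℕ)) (f : ℕ → ℕ) : Prop :=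
  ∀ n, (∃ g ∈ U, (c.eval g n).Dom) ∧ ∀ g ∈ U, ∀ m ∈ c.eval g n, m = f n

theorem Determines.eq {c : OracleCode} {U : Set (ℕ → ℕ)} {f f' : ℕ → ℕ}
    (hf : c.Determines U f) (hf' : c.Determines U f') : f = f' := by
  funext n
  obtain ⟨g, hgU, hdom⟩ := (hf n).1
  exact ((hf n).2 g hgU _ (Part.get_mem hdom)).symm.trans ((hf' n).2 g hgU _ (Part.get_mem hdom))

end OracleCode

/-- The determined functions are exactly the computable ones, but all that is needed of them is
that there are only countably many. -/
def Determined (f : ℕ → ℕ) : Prop :=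
  ∃ c : OracleCode, ∃ U ∈ countableBasis (ℕ → ℕ), c.Determines U f

theorem countable_setOf_determined : {f | Determined f}.Countable := by
  have : {f | Determined f} =
      ⋃ (c : OracleCode) (U ∈ countableBasis (ℕ → ℕ)), {f | c.Determines U f} := by
    ext f; simp [Determined]
  rw [this]
  exact countable_iUnion fun c => (countable_countableBasis _).biUnion fun U _ =>
    Set.Subsingleton.countable fun f hf f' hf' => OracleCode.Determines.eq hf hf'

theorem isNowhereDense_setOf_eval_eq {f : ℕ → ℕ} (hf : ¬ Determined f) (c : OracleCode) :
    IsNowhereDense {g | c.eval g = f} := by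
  refine (isBasis_countableBasis _).isNowhereDense fun U hUB hU => ?_
  have hfU : ¬ c.Determines U f := fun h => hf ⟨c, U, hUB, h⟩
  unfold OracleCode.Determines at hfU
  push Not at hfU
  obtain ⟨n, hn⟩ := hfU
  by_cases hdom : ∃ g ∈ U, (c.eval g n).Dom
  · obtain ⟨g, hgU, m, hm, hmf⟩ := hn hdom
    refine ⟨U ∩ {g | m ∈ c.eval g n}, inter_subset_left,
      (isOpen_of_mem_countableBasis hUB).inter (c.isOpen_setOf_mem_eval n m), ⟨g, hgU, hm⟩,
      disjoint_left.mpr fun g' hg' hg'f => hmf ?_⟩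
    simpa [show c.eval g' = f from hg'f] using hg'.2
  · refine ⟨U, subset_rfl, isOpen_of_mem_countableBasis hUB, hU,
      disjoint_left.mpr fun g hgU hg => ?_⟩
    exact hdom ⟨g, hgU, by simp [show c.eval g = f from hg]⟩

theorem isMeagre_setOf_turingReducible_right {f : ℕ → ℕ} (hf : ¬ Determined f) :
    IsMeagre {g | f ≤ᵀ g} := by
  refine (isMeagre_iUnion fun c => (isNowhereDense_setOf_eval_eq hf c).isMeagre).mono
    fun g hg => ?_
  exact mem_iUnion.mpr (OracleCode.exists_eval_eq hg)

theorem countable_setOf_turingReducible_left (g : ℕ → ℕ) : {f | f ≤ᵀ g}.Countable := by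
  refine (countable_iUnion fun c : OracleCode => Set.Subsingleton.countable
    (s := {f : ℕ → ℕ | c.eval g = f})
    fun f hf f' hf' => PFun.lift_injective (hf.symm.trans hf')).mono fun f hf => ?_
  exact mem_iUnion.mpr (OracleCode.exists_eval_eq hf)

theorem exists_incomparable {s : Set (ℕ → ℕ)} (hs : s.Countable) (k : ℕ) :
    ∃ h : ℕ → ℕ, h 0 = k ∧ ¬ Determined h ∧
      ∀ f ∈ s, ¬ h ≤ᵀ f ∧ (¬ Determined f → ¬ f ≤ᵀ h) := by
  have hmeagre : IsMeagre ({h | Determined h} ∪ (⋃ f ∈ s, {h | h ≤ᵀ f}) ∪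
      ⋃ f ∈ s ∩ {f | ¬ Determined f}, {h | f ≤ᵀ h}) :=
    ((countable_setOf_determined.union
      (hs.biUnion fun f _ => countable_setOf_turingReducible_left f)).isMeagre).union
      (isMeagre_biUnion (hs.mono inter_subset_left) fun f hf =>
        isMeagre_setOf_turingReducible_right hf.2)
  have hopen : IsOpen {h : ℕ → ℕ | h 0 = k} :=
    (isOpen_discrete {k}).preimage (continuous_apply 0 : Continuous fun h : ℕ → ℕ => h 0)
  obtain ⟨h, hk, hgood⟩ := not_subset.mp fun hsub =>
    not_isMeagre_of_isOpen hopen ⟨fun _ => k, rfl⟩ (hmeagre.mono hsub)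
  simp only [mem_union, mem_iUnion, mem_inter_iff, not_or, not_exists] at hgood
  exact ⟨h, hk, hgood.1.1, fun f hf => ⟨hgood.1.2 f hf, fun hfd => hgood.2 f ⟨hf, hfd⟩⟩⟩

noncomputable def incomparableSeq (k : ℕ) : ℕ → ℕ :=
  (exists_incomparable (finite_range fun j : Fin k => incomparableSeq j).countable k).choose
decreasing_by all_goals exact j.2

theorem incomparableSeq_spec (k : ℕ) :
    incomparableSeq k 0 = k ∧ ¬ Determined (incomparableSeq k) ∧
    ∀ j < k, ¬ incomparableSeq k ≤ᵀ incomparableSeq j ∧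
      (¬ Determined (incomparableSeq j) → ¬ incomparableSeq j ≤ᵀ incomparableSeq k) := by
  rw [incomparableSeq]
  obtain ⟨h0, hdet, hinc⟩ :=
    (exists_incomparable (finite_range fun j : Fin k => incomparableSeq j).countable k).choose_spec
  exact ⟨h0, hdet, fun j hjk => hinc _ ⟨⟨j, hjk⟩, rfl⟩⟩

theorem incomparableSeq_incomparable {j k : ℕ} (hjk : j < k) :
    ¬ incomparableSeq k ≤ᵀ incomparableSeq j ∧ ¬ incomparableSeq j ≤ᵀ incomparableSeq k :=
  have hinc := (incomparableSeq_spec k).2.2 j hjk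
  ⟨hinc.1, hinc.2 (incomparableSeq_spec j).2.1⟩

/-- There is a nonempty closed, non-compact subset `Q` of Baire space any two distinct
elements of which are Turing incomparable. -/
theorem exists_closed_noncompact_pairwise_turing_incomparable :
    ∃ Q : Set (ℕ → ℕ), Q.Nonempty ∧ IsClosed Q ∧ ¬ IsCompact Q ∧
      ∀ f ∈ Q, ∀ g ∈ Q, f ≠ g → ¬ f ≤ᵀ g ∧ ¬ g ≤ᵀ f := by
  have hsection : Function.LeftInverse (fun f : ℕ → ℕ => f 0) incomparableSeq :=
    fun k => (incomparableSeq_spec k).1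
  refine ⟨range incomparableSeq, range_nonempty _,
    hsection.isClosed_range (continuous_apply 0) continuous_of_discreteTopology,
    hsection.not_isCompact_range (continuous_apply 0), ?_⟩
  rintro _ ⟨j, rfl⟩ _ ⟨k, rfl⟩ hne
  rcases lt_trichotomy j k with hjk | rfl | hkj
  · exact (incomparableSeq_incomparable hjk).symm
  · exact absurd rfl hne
  · exact incomparableSeq_incomparable hkj
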